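/- arXiv:1508.03701 — 3 statements merged into one kernel-verified Lean document; each statement's English description precedes it below -/
import Mathlib

section
/- Let k ≥ 3 be a natural number and let y, y' ∈ ℝ^k satisfy ∑_{i=1}^k y_i^2 = 1 and ∑_{i=1}^k y'_i{}^2 = 1. Set x_i = y_i^2 and x'_i = y'_i{}^2. Then 2^{−k} · ∑_{σ ∈ {−1,+1}^k} ((2·2 + k − 2)/(k − 2)) · C_2^{k/2−1}(∑_{i=1}^k σ_i y_i y'_i) = (k/2 + 1) · (k · ∑_{j=1}^k x_j x'_j − 1), i.e., the sign-averaged degree-2 Gegenbauer term equals the Griffiths eigenfunction Q_1(x, x') = (μ+1)(ξ_1 − 1) with μ = k/2, ε = 1/2, ξ_1 = μ ∑_j x_j x'_j / ε. -/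
/-- The Gegenbauer polynomial C_L^p(z). -/
noncomputable def gegenbauer (p : ℝ) (L : ℕ) (z : ℝ) : ℝ :=
  ∑ j ∈ Finset.range (L / 2 + 1),
    (-1) ^ j * Real.Gamma ((L : ℝ) - j + p) /
      (Real.Gamma p * (Nat.factorial j) * (Nat.factorial (L - 2 * j))) * (2 * z) ^ (L - 2 * j)

/-- The sign ±1 attached to a boolean. -/
def sgn (b : Bool) : ℝ := if b then 1 else -1

/-!
`C_2^p(z) = 2p(p+1) z² - p`, and averaging `(∑ σᵢ aᵢ)²` over all sign vectors kills
the cross terms, leaving `∑ aᵢ²`. With `aᵢ = yᵢ y'ᵢ` we have `aᵢ² = xᵢ x'ᵢ`, and for `p = k/2 - 1`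
the prefactor `(k+2)/(k-2)` turns `(k-2)/2 · (k ∑ xᵢ x'ᵢ - 1)` into `(k/2 + 1)(k ∑ xᵢ x'ᵢ - 1)`.
-/

open Finset

lemma gegenbauer_two {p : ℝ} (hp : ∀ m : ℕ, p ≠ -m) (z : ℝ) :
    gegenbauer p 2 z = 2 * p * (p + 1) * z ^ 2 - p := by
  have hp0 : p ≠ 0 := by simpa using hp 0
  have hp1 : p + 1 ≠ 0 := fun h => hp 1 (by simp; linarith)
  have hΓ : Real.Gamma p ≠ 0 := Real.Gamma_ne_zero hp
  have hΓ1 : Real.Gamma (1 + p) = p * Real.Gamma p := by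
    rw [add_comm, Real.Gamma_add_one hp0]
  have hΓ2 : Real.Gamma (2 + p) = (p + 1) * (p * Real.Gamma p) := by
    rw [show (2 : ℝ) + p = (p + 1) + 1 by ring, Real.Gamma_add_one hp1, Real.Gamma_add_one hp0]
  simp only [gegenbauer, Nat.reduceDiv, Nat.reduceAdd, sum_range_succ, sum_range_zero]
  norm_num [Nat.factorial, hΓ1, hΓ2]
  field_simp
  ring

lemma sgn_mul_self (b : Bool) : sgn b * sgn b = 1 := by cases b <;> simp [sgn]

lemma sgn_not (b : Bool) : sgn (!b) = -sgn b := by cases b <;> simp [sgn]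

section SignSums

variable {ι : Type*} [Fintype ι] [DecidableEq ι]

lemma sum_sgn_mul_sgn_of_ne {i j : ι} (hij : i ≠ j) :
    ∑ σ : ι → Bool, sgn (σ i) * sgn (σ j) = 0 := by
  let flip : Equiv.Perm (ι → Bool) :=
    Function.Involutive.toPerm (fun σ => Function.update σ i (!σ i)) fun σ => by simp
  have hflip : ∀ σ, sgn (flip σ i) * sgn (flip σ j) = -(sgn (σ i) * sgn (σ j)) := fun σ => by
    change sgn (Function.update σ i (!σ i) i) * sgn (Function.update σ i (!σ i) j) = _
    simp [hij.symm, sgn_not]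
  have h := Equiv.sum_comp flip fun σ => sgn (σ i) * sgn (σ j)
  simp only [hflip, sum_neg_distrib] at h
  linarith

lemma sum_sgn_mul_sgn (i j : ι) :
    ∑ σ : ι → Bool, sgn (σ i) * sgn (σ j) = if i = j then 2 ^ Fintype.card ι else 0 := by
  split_ifs with hij
  · simp [hij, sgn_mul_self]
  · exact sum_sgn_mul_sgn_of_ne hij

lemma sum_sq_sum_sgn_mul (a : ι → ℝ) :
    ∑ σ : ι → Bool, (∑ i, sgn (σ i) * a i) ^ 2 = 2 ^ Fintype.card ι * ∑ i, a i ^ 2 := by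
  calc ∑ σ : ι → Bool, (∑ i, sgn (σ i) * a i) ^ 2
      = ∑ σ : ι → Bool, ∑ i, ∑ j, sgn (σ i) * sgn (σ j) * (a i * a j) := by
        simp only [sq, sum_mul_sum]
        exact sum_congr rfl fun σ _ => sum_congr rfl fun i _ => sum_congr rfl fun j _ => by ring
    _ = ∑ i, ∑ j, (∑ σ : ι → Bool, sgn (σ i) * sgn (σ j)) * (a i * a j) := by
        simp only [sum_mul]
        rw [sum_comm]
        exact sum_congr rfl fun i _ => sum_comm
    _ = 2 ^ Fintype.card ι * ∑ i, a i ^ 2 := by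
        simp [sum_sgn_mul_sgn, mul_sum, sq]

end SignSums

theorem degree_two_gegenbauer_eq_Q1_general (k : ℕ) (hk : 3 ≤ k) (y y' : Fin k → ℝ)
    (x x' : Fin k → ℝ) (hx : ∀ i, x i = (y i) ^ 2) (hx' : ∀ i, x' i = (y' i) ^ 2) :
    ((2 : ℝ) ^ k)⁻¹ * ∑ σ : Fin k → Bool,
        ((2 * 2 + (k : ℝ) - 2) / ((k : ℝ) - 2)) *
          gegenbauer ((k : ℝ) / 2 - 1) 2 (∑ i : Fin k, sgn (σ i) * y i * y' i) =
      ((k : ℝ) / 2 + 1) * ((k : ℝ) * (∑ j : Fin k, x j * x' j) - 1) := by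
  have hk3 : (3 : ℝ) ≤ k := by exact_mod_cast hk
  have hp : ∀ m : ℕ, (k : ℝ) / 2 - 1 ≠ -m := fun m => by
    have := m.cast_nonneg (α := ℝ); intro h; linarith
  have hxx' : ∑ j, x j * x' j = ∑ i, (y i * y' i) ^ 2 :=
    sum_congr rfl fun i _ => by rw [hx, hx']; ring
  have hsigns := sum_sq_sum_sgn_mul fun i => y i * y' i
  simp only [Fintype.card_fin, ← mul_assoc] at hsigns
  simp only [gegenbauer_two hp, ← mul_sum, sum_sub_distrib, hsigns, hxx', sum_const, card_univ,
    Fintype.card_fun, Fintype.card_fin, Fintype.card_bool, nsmul_eq_mul, Nat.cast_pow,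
    Nat.cast_ofNat]
  have hk2 : (k : ℝ) - 2 ≠ 0 := by linarith
  field_simp
  ring

/-- The sign-averaged degree-2 Gegenbauer term equals the Griffiths eigenfunction
Q_1(x,x') = (μ+1)(ξ_1 − 1) with μ = k/2, ε = 1/2, x_i = y_i², x'_i = y'_i². -/
theorem degree_two_gegenbauer_eq_Q1 (k : ℕ) (hk : 3 ≤ k) (y y' : Fin k → ℝ)
    (hy : ∑ i : Fin k, (y i) ^ 2 = 1) (hy' : ∑ i : Fin k, (y' i) ^ 2 = 1)
    (x x' : Fin k → ℝ) (hx : ∀ i, x i = (y i) ^ 2) (hx' : ∀ i, x' i = (y' i) ^ 2) :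
    ((2 : ℝ) ^ k)⁻¹ * ∑ σ : Fin k → Bool,
        ((2 * 2 + (k : ℝ) - 2) / ((k : ℝ) - 2)) *
          gegenbauer ((k : ℝ) / 2 - 1) 2 (∑ i : Fin k, sgn (σ i) * y i * y' i) =
      ((k : ℝ) / 2 + 1) * ((k : ℝ) * (∑ j : Fin k, x j * x' j) - 1) :=
  degree_two_gegenbauer_eq_Q1_general k hk y y' x x' hx hx'
end

section
/- Let k ≥ 3 be a natural number and let y, y' ∈ ℝ^k satisfy ∑_{i=1}^k y_i^2 = 1 and ∑_{i=1}^k y'_i{}^2 = 1. Set x_i = y_i^2, x'_i = y'_i{}^2, μ = k/2, s_2 = ∑_{j=1}^k x_j x'_j and s_4 = ∑_{j=1}^k (x_j x'_j)^2. Then 2^{−k} · ∑_{σ ∈ {−1,+1}^k} ((2·4 + k − 2)/(k − 2)) · C_4^{k/2−1}(∑_{i=1}^k σ_i y_i y'_i) = (1/2)(μ+3)[(μ+2)·ξ_2 − 2(μ+1)·ξ_1 + μ], where ξ_1 = 2μ·s_2 and ξ_2 = μ(μ+1)·((4/3)·s_4 + 4·(s_2^2 − s_4)), i.e., the sign-averaged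 degree-4 Gegenbauer term equals the Griffiths eigenfunction Q_2(x, x') for mutation rate ε = 1/2. -/
open Finset

theorem Real.Gamma_add_nat {p : ℝ} (hp : ∀ m : ℕ, p ≠ -m) (n : ℕ) :
    Gamma (p + n) = (ascPochhammer ℝ n).eval p * Gamma p := by
  induction n with
  | zero => simp
  | succ n ih =>
    have hpn : p + n ≠ 0 := fun h => hp n (by linarith)
    rw [Nat.cast_succ, ← add_assoc, Gamma_add_one hpn, ih, ascPochhammer_succ_eval]
    ring

lemma gegenbauer_four {p : ℝ} (hp : ∀ m : ℕ, p ≠ -m) (z : ℝ) :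
    gegenbauer p 4 z
      = (2 / 3) * (p * (p + 1) * (p + 2) * (p + 3)) * z ^ 4
        - 2 * (p * (p + 1) * (p + 2)) * z ^ 2 + p * (p + 1) / 2 := by
  have hΓ := Real.Gamma_ne_zero hp
  have hΓ_add (n : ℕ) : Real.Gamma (n + p) = (ascPochhammer ℝ n).eval p * Real.Gamma p := by
    rw [add_comm, Real.Gamma_add_nat hp]
  simp only [gegenbauer, sum_range_succ, sum_range_zero]
  norm_num [Nat.factorial]
  rw [show (4 : ℝ) + p = (4 : ℕ) + p by norm_num, show (3 : ℝ) + p = (3 : ℕ) + p by norm_num,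
    show (2 : ℝ) + p = (2 : ℕ) + p by norm_num, hΓ_add, hΓ_add, hΓ_add]
  simp only [ascPochhammer_succ_eval, ascPochhammer_zero, Polynomial.eval_one]
  field_simp
  push_cast
  ring

lemma Fintype.sum_fin_succ_bool_pi {M : Type*} [AddCommMonoid M] {n : ℕ}
    (f : (Fin (n + 1) → Bool) → M) :
    ∑ σ, f σ = ∑ τ : Fin n → Bool, (f (Fin.cons true τ) + f (Fin.cons false τ)) := by
  rw [← (Fin.consEquiv fun _ => Bool).sum_comp, Fintype.sum_prod_type_right]
  simp [Fin.consEquiv]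

section SignedSum

variable {n : ℕ}

def signedSum (a : Fin n → ℝ) (σ : Fin n → Bool) : ℝ := ∑ i, sgn (σ i) * a i

lemma signedSum_cons (a : Fin (n + 1) → ℝ) (b : Bool) (τ : Fin n → Bool) :
    signedSum a (Fin.cons b τ) = sgn b * a 0 + signedSum (fun i => a i.succ) τ := by
  simp [signedSum, Fin.sum_univ_succ]

lemma Fintype.sum_const_fin_bool_pi (c : ℝ) : ∑ _σ : Fin n → Bool, c = 2 ^ n * c := by
  simp

lemma sum_signedSum_sq (a : Fin n → ℝ) :
    ∑ σ, signedSum a σ ^ 2 = 2 ^ n * ∑ i, a i ^ 2 := by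
  induction n with
  | zero => simp [signedSum]
  | succ n ih =>
    have key (u v : ℝ) : (1 * u + v) ^ 2 + (-1 * u + v) ^ 2 = 2 * u ^ 2 + 2 * v ^ 2 := by ring
    simp only [Fintype.sum_fin_succ_bool_pi, signedSum_cons, sgn, if_true, Bool.false_eq_true,
      if_false, key, sum_add_distrib, ← mul_sum, ih, Fintype.sum_const_fin_bool_pi,
      Fin.sum_univ_succ]
    ring

lemma sum_signedSum_pow_four (a : Fin n → ℝ) :
    ∑ σ, signedSum a σ ^ 4 = 2 ^ n * (3 * (∑ i, a i ^ 2) ^ 2 - 2 * ∑ i, a i ^ 4) := by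
  induction n with
  | zero => simp [signedSum]
  | succ n ih =>
    have key (u v : ℝ) :
        (1 * u + v) ^ 4 + (-1 * u + v) ^ 4 = 2 * u ^ 4 + 12 * u ^ 2 * v ^ 2 + 2 * v ^ 4 := by
      ring
    simp only [Fintype.sum_fin_succ_bool_pi, signedSum_cons, sgn, if_true, Bool.false_eq_true,
      if_false, key, sum_add_distrib, ← mul_sum, ih, sum_signedSum_sq,
      Fintype.sum_const_fin_bool_pi, Fin.sum_univ_succ]
    ring

lemma sum_even_quartic_signedSum (a : Fin n → ℝ) (A B C : ℝ) :
    ∑ σ, (A * signedSum a σ ^ 4 - B * signedSum a σ ^ 2 + C)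
      = 2 ^ n * (A * (3 * (∑ i, a i ^ 2) ^ 2 - 2 * ∑ i, a i ^ 4) - B * ∑ i, a i ^ 2 + C) := by
  rw [sum_add_distrib, sum_sub_distrib, ← mul_sum, ← mul_sum, sum_signedSum_pow_four,
    sum_signedSum_sq, Fintype.sum_const_fin_bool_pi]
  ring

end SignedSum

theorem degree_four_gegenbauer_eq_Q2_general (k : ℕ) (hk : 3 ≤ k) (y y' : Fin k → ℝ)
    (x x' : Fin k → ℝ) (hx : ∀ i, x i = (y i) ^ 2) (hx' : ∀ i, x' i = (y' i) ^ 2)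
    (μ s₂ s₄ ξ₁ ξ₂ : ℝ) (hμ : μ = (k : ℝ) / 2)
    (hs₂ : s₂ = ∑ j : Fin k, x j * x' j) (hs₄ : s₄ = ∑ j : Fin k, (x j * x' j) ^ 2)
    (hξ₁ : ξ₁ = 2 * μ * s₂)
    (hξ₂ : ξ₂ = μ * (μ + 1) * ((4 / 3) * s₄ + 4 * (s₂ ^ 2 - s₄))) :
    ((2 : ℝ) ^ k)⁻¹ * ∑ σ : Fin k → Bool,
        ((2 * 4 + (k : ℝ) - 2) / ((k : ℝ) - 2)) *
          gegenbauer ((k : ℝ) / 2 - 1) 4 (∑ i : Fin k, sgn (σ i) * y i * y' i) =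
      (1 / 2) * (μ + 3) * ((μ + 2) * ξ₂ - 2 * (μ + 1) * ξ₁ + μ) := by
  have hk3 : (3 : ℝ) ≤ k := by exact_mod_cast hk
  have hp : ∀ m : ℕ, (k : ℝ) / 2 - 1 ≠ -m := fun m h => by linarith [m.cast_nonneg (α := ℝ)]
  set a : Fin k → ℝ := fun i => y i * y' i
  have hz (σ : Fin k → Bool) : ∑ i, sgn (σ i) * y i * y' i = signedSum a σ :=
    sum_congr rfl fun i _ => mul_assoc _ _ _
  have hs₂a : s₂ = ∑ i, a i ^ 2 := hs₂.trans (sum_congr rfl fun i _ => by rw [hx, hx']; ring)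
  have hs₄a : s₄ = ∑ i, a i ^ 4 := hs₄.trans (sum_congr rfl fun i _ => by rw [hx, hx']; ring)
  simp only [hz, gegenbauer_four hp, ← mul_sum, sum_even_quartic_signedSum]
  rw [← hs₂a, ← hs₄a, hξ₂, hξ₁, hμ]
  have hk2 : (k : ℝ) - 2 ≠ 0 := by linarith
  field_simp
  ring

/-- The sign-averaged degree-4 Gegenbauer term equals the Griffiths eigenfunction
Q_2(x,x') = (1/2)(μ+3)[(μ+2)ξ_2 − 2(μ+1)ξ_1 + μ] with μ = k/2, ε = 1/2,
x_i = y_i², x'_i = y'_i², ξ_1 = 2μ s_2 and ξ_2 = μ(μ+1)((4/3)s_4 + 4(s_2² − s_4)). -/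
theorem degree_four_gegenbauer_eq_Q2 (k : ℕ) (hk : 3 ≤ k) (y y' : Fin k → ℝ)
    (hy : ∑ i : Fin k, (y i) ^ 2 = 1) (hy' : ∑ i : Fin k, (y' i) ^ 2 = 1)
    (x x' : Fin k → ℝ) (hx : ∀ i, x i = (y i) ^ 2) (hx' : ∀ i, x' i = (y' i) ^ 2)
    (μ s₂ s₄ ξ₁ ξ₂ : ℝ) (hμ : μ = (k : ℝ) / 2)
    (hs₂ : s₂ = ∑ j : Fin k, x j * x' j) (hs₄ : s₄ = ∑ j : Fin k, (x j * x' j) ^ 2)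
    (hξ₁ : ξ₁ = 2 * μ * s₂)
    (hξ₂ : ξ₂ = μ * (μ + 1) * ((4 / 3) * s₄ + 4 * (s₂ ^ 2 - s₄))) :
    ((2 : ℝ) ^ k)⁻¹ * ∑ σ : Fin k → Bool,
        ((2 * 4 + (k : ℝ) - 2) / ((k : ℝ) - 2)) *
          gegenbauer ((k : ℝ) / 2 - 1) 4 (∑ i : Fin k, sgn (σ i) * y i * y' i) =
      (1 / 2) * (μ + 3) * ((μ + 2) * ξ₂ - 2 * (μ + 1) * ξ₁ + μ) :=
  degree_four_gegenbauer_eq_Q2_general k hk y y' x x' hx hx' μ s₂ s₄ ξ₁ ξ₂ hμ hs₂ hs₄ hξ₁ hξ₂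
end

section
/- Let k ≥ 2 be a natural number, let ε_1,...,ε_k be positive reals with μ = ∑_{i=1}^k ε_i, and define p on the open simplex U = {x ∈ ℝ^{k−1} : x_j > 0 for all j and ∑_{j=1}^{k−1} x_j < 1} by p(x) = (∏_{j=1}^{k−1} x_j^{ε_j − 1}) · (1 − ∑_{j=1}^{k−1} x_j)^{ε_k − 1}. Then for every i ∈ {1,...,k−1} and every x ∈ U, the probability flux vanishes: (1/2) · ∑_{j=1}^{k−1} ∂/∂x_j [ x_i (δ_{ij} − x_j) p(x) ] − (1/2) · (ε_i − μ x_i) · p(x) = 0. -/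
/-!
On the open simplex the density is `exp φ` with `φ = ∑ a_j log x_j + b log (1 - ∑ x_j)`, so
`∂_j p = p (a_j / x_j - b / x_k)` where `x_k = 1 - ∑ x_j`. Expanding `∑_j ∂_j [x_i (δ_ij - x_j) p]`
by the product rule, the terms carrying `b / x_k` cancel because `∑_j x_j = 1 - x_k`, and what is
left is `(a_i + 1 - (∑ a + b + k) x_i) p`, which is `(ε_i - μ x_i) p` for `a = ε - 1`, `b = ε_k - 1`.
-/

open Real Finset

section DirichletFlux

variable {ι : Type*} [Fintype ι]

def openSimplex (ι : Type*) [Fintype ι] : Set (ι → ℝ) :=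
  {z | (∀ j, 0 < z j) ∧ ∑ j, z j < 1}

/-- The Dirichlet density without its normalising constant, with exponents `a j = ε j - 1` on the
free coordinates and `b = ε_k - 1` on the implicit last one. -/
noncomputable def dirichletDensity (a : ι → ℝ) (b : ℝ) (z : ι → ℝ) : ℝ :=
  (∏ j, z j ^ a j) * (1 - ∑ j, z j) ^ b

noncomputable def logDirichletDensity (a : ι → ℝ) (b : ℝ) (z : ι → ℝ) : ℝ :=
  ∑ j, a j * log (z j) + b * log (1 - ∑ j, z j)

theorem isOpen_openSimplex : IsOpen (openSimplex ι) := by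
  have hpos : IsOpen {z : ι → ℝ | ∀ j, 0 < z j} := by
    simp only [Set.ofPred_forall]
    exact isOpen_iInter_of_finite fun j => isOpen_lt continuous_const (continuous_apply j)
  exact hpos.inter
    (isOpen_lt (continuous_finsetSum _ fun j _ => continuous_apply j) continuous_const)

theorem sub_sum_pos_of_mem_openSimplex {x : ι → ℝ} (hx : x ∈ openSimplex ι) :
    0 < 1 - ∑ j, x j :=
  sub_pos.2 hx.2

theorem dirichletDensity_eq_exp {a : ι → ℝ} {b : ℝ} {x : ι → ℝ} (hx : x ∈ openSimplex ι) :
    dirichletDensity a b x = exp (logDirichletDensity a b x) := by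
  rw [dirichletDensity, logDirichletDensity, exp_add, exp_sum,
    rpow_def_of_pos (sub_sum_pos_of_mem_openSimplex hx), mul_comm (log _)]
  congr 1
  exact prod_congr rfl fun j _ => by rw [rpow_def_of_pos (hx.1 j), mul_comm]

theorem hasFDerivAt_logDirichletDensity (a : ι → ℝ) (b : ℝ) {x : ι → ℝ}
    (hx : x ∈ openSimplex ι) :
    HasFDerivAt (logDirichletDensity a b)
      (∑ j, (a j / x j - b / (1 - ∑ k, x k)) •
        (ContinuousLinearMap.proj j : (ι → ℝ) →L[ℝ] ℝ)) x := by
  have hsum : HasFDerivAt (fun z : ι → ℝ => ∑ j, z j)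
      (∑ j, (ContinuousLinearMap.proj j : (ι → ℝ) →L[ℝ] ℝ)) x :=
    HasFDerivAt.fun_sum fun j _ => hasFDerivAt_apply j x
  have hlog : HasFDerivAt (fun z : ι → ℝ => ∑ j, a j * log (z j))
      (∑ j, a j • (x j)⁻¹ • (ContinuousLinearMap.proj j : (ι → ℝ) →L[ℝ] ℝ)) x :=
    HasFDerivAt.fun_sum fun j _ => ((hasFDerivAt_apply j x).log (hx.1 j).ne').const_mul (a j)
  have hlast := (((hasFDerivAt_const (1 : ℝ) x).sub hsum).log
    (sub_sum_pos_of_mem_openSimplex hx).ne').const_mul b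
  refine (hlog.add hlast).congr_fderiv (ContinuousLinearMap.ext fun v => ?_)
  simp only [Pi.sub_apply, zero_sub, smul_neg, add_apply, _root_.sum_apply, smul_apply,
    ContinuousLinearMap.proj_apply, smul_eq_mul, neg_apply, mul_sum, div_eq_inv_mul, sub_mul,
    sum_sub_distrib]
  rw [← sub_eq_add_neg]
  congr 1 <;> exact sum_congr rfl fun _ _ => by ring

theorem hasFDerivAt_dirichletDensity (a : ι → ℝ) (b : ℝ) {x : ι → ℝ}
    (hx : x ∈ openSimplex ι) :
    HasFDerivAt (dirichletDensity a b) (dirichletDensity a b x • ∑ j,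
      (a j / x j - b / (1 - ∑ k, x k)) • (ContinuousLinearMap.proj j : (ι → ℝ) →L[ℝ] ℝ)) x := by
  have heq : dirichletDensity a b =ᶠ[nhds x] fun z => exp (logDirichletDensity a b z) := by
    filter_upwards [isOpen_openSimplex.mem_nhds hx] with z hz using dirichletDensity_eq_exp hz
  rw [dirichletDensity_eq_exp hx]
  exact (hasFDerivAt_logDirichletDensity a b hx).exp.congr_of_eventuallyEq heq

theorem sum_mul_div_sub_div {a : ι → ℝ} {b : ℝ} {x : ι → ℝ} (hx : x ∈ openSimplex ι) :
    ∑ j, x j * (a j / x j - b / (1 - ∑ k, x k)) = ∑ j, a j + b - b / (1 - ∑ k, x k) := by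
  have hs := (sub_sum_pos_of_mem_openSimplex hx).ne'
  simp only [mul_sub, sum_sub_distrib, mul_div_cancel₀ _ (hx.1 _).ne', ← sum_mul]
  field_simp
  ring

variable [DecidableEq ι]

theorem sum_ite_sub_mul (i : ι) (x h : ι → ℝ) :
    ∑ j, ((if i = j then 1 else 0) - x j) * h j = h i - ∑ j, x j * h j := by
  simp [sub_mul, sum_sub_distrib]

theorem fderiv_dirichletDensity_single (a : ι → ℝ) (b : ℝ) {x : ι → ℝ}
    (hx : x ∈ openSimplex ι) (j : ι) :
    fderiv ℝ (dirichletDensity a b) x (Pi.single j 1) =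
      dirichletDensity a b x * (a j / x j - b / (1 - ∑ k, x k)) := by
  simp [(hasFDerivAt_dirichletDensity a b hx).fderiv, Pi.single_apply]

theorem fderiv_flux_single {P : (ι → ℝ) → ℝ} {x : ι → ℝ} (hP : DifferentiableAt ℝ P x)
    (i j : ι) :
    fderiv ℝ (fun z => z i * ((if i = j then 1 else 0) - z j) * P z) x (Pi.single j 1) =
      ((if i = j then 1 else 0) - x j) *
        (x i * fderiv ℝ P x (Pi.single j 1) + if i = j then P x else 0) - x i * P x := by
  have h : HasFDerivAt (fun z => z i * ((if i = j then 1 else 0) - z j) * P z) _ x :=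
    ((hasFDerivAt_apply i x).mul ((hasFDerivAt_const _ x).sub (hasFDerivAt_apply j x))).mul
      hP.hasFDerivAt
  rw [h.fderiv]
  simp only [Pi.mul_apply, add_apply, smul_apply, sub_apply, zero_apply,
    ContinuousLinearMap.proj_apply, Pi.single_apply, smul_eq_mul]
  split_ifs <;> ring

theorem sum_fderiv_flux_dirichletDensity (a : ι → ℝ) (b : ℝ) {x : ι → ℝ}
    (hx : x ∈ openSimplex ι) (i : ι) :
    ∑ j, fderiv ℝ (fun z => z i * ((if i = j then 1 else 0) - z j) * dirichletDensity a b z) x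
        (Pi.single j 1) =
      (a i + 1 - (∑ j, a j + b + Fintype.card ι + 1) * x i) * dirichletDensity a b x := by
  simp only [fderiv_flux_single (hasFDerivAt_dirichletDensity a b hx).differentiableAt,
    fderiv_dirichletDensity_single a b hx]
  set P := dirichletDensity a b x
  set g := fun j => a j / x j - b / (1 - ∑ k, x k)
  have hsum : ∑ j, x j * (x i * (P * g j) + if i = j then P else 0) =
      x i * P * (∑ j, x j * g j + 1) := by
    simp only [mul_add, mul_ite, mul_zero, sum_add_distrib, sum_ite_eq, mem_univ, if_true, mul_sum,
      mul_one]
    exact congrArg (· + _) (sum_congr rfl fun _ _ => by ring)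
  rw [sum_sub_distrib, sum_ite_sub_mul, sum_const, card_univ, nsmul_eq_mul, hsum,
    sum_mul_div_sub_div hx, if_pos rfl]
  field_simp [(hx.1 i).ne']
  ring

end DirichletFlux

theorem dirichlet_zero_flux_general (n : ℕ)
    (ε : Fin (n + 1) → ℝ) (μ : ℝ) (hμ : μ = ∑ i : Fin (n + 1), ε i)
    (p : (Fin n → ℝ) → ℝ)
    (hp : ∀ z : Fin n → ℝ, p z =
      (∏ j : Fin n, (z j) ^ (ε j.castSucc - 1)) * (1 - ∑ j : Fin n, z j) ^ (ε (Fin.last n) - 1))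
    (U : Set (Fin n → ℝ)) (hU : U = {z | (∀ j, 0 < z j) ∧ ∑ j : Fin n, z j < 1}) :
    ∀ i : Fin n, ∀ x ∈ U,
      (1 / 2) * (∑ j : Fin n,
          fderiv ℝ (fun z => z i * ((if i = j then (1 : ℝ) else 0) - z j) * p z) x
            (Pi.single j 1)) -
        (1 / 2) * (ε i.castSucc - μ * x i) * p x = 0 := by
  intro i x hx
  obtain rfl : p = dirichletDensity (fun j => ε j.castSucc - 1) (ε (Fin.last n) - 1) := funext hp
  subst hU
  have hμ' : ∑ j : Fin n, (ε j.castSucc - 1) + (ε (Fin.last n) - 1) + n + 1 = μ := by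
    simp only [hμ, Fin.sum_univ_castSucc, sum_sub_distrib, sum_const, card_univ, Fintype.card_fin,
      nsmul_eq_mul, mul_one]
    ring
  rw [sum_fderiv_flux_dirichletDensity _ _ hx, Fintype.card_fin, hμ']
  ring

/-- Zero probability flux of the Dirichlet density for the Wright-Fisher diffusion with
parent-independent mutation. Here k = n + 1 ≥ 2, the simplex coordinates are
x_1, ..., x_n (with x_k = 1 − ∑ x_j implicit), and
p(x) = (∏_{j=1}^{n} x_j^{ε_j − 1}) (1 − ∑ x_j)^{ε_k − 1}. -/
theorem dirichlet_zero_flux (n : ℕ) (hn : 1 ≤ n)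
    (ε : Fin (n + 1) → ℝ) (hε : ∀ i, 0 < ε i) (μ : ℝ) (hμ : μ = ∑ i : Fin (n + 1), ε i)
    (p : (Fin n → ℝ) → ℝ)
    (hp : ∀ z : Fin n → ℝ, p z =
      (∏ j : Fin n, (z j) ^ (ε j.castSucc - 1)) * (1 - ∑ j : Fin n, z j) ^ (ε (Fin.last n) - 1))
    (U : Set (Fin n → ℝ)) (hU : U = {z | (∀ j, 0 < z j) ∧ ∑ j : Fin n, z j < 1}) :
    ∀ i : Fin n, ∀ x ∈ U,
      (1 / 2) * (∑ j : Fin n,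
          fderiv ℝ (fun z => z i * ((if i = j then (1 : ℝ) else 0) - z j) * p z) x
            (Pi.single j 1)) -
        (1 / 2) * (ε i.castSucc - μ * x i) * p x = 0 :=
  dirichlet_zero_flux_general n ε μ hμ p hp U hU
end
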